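/- Let G be a finite simple connected graph and let v be a normalized eigenvector of the normalized modularity matrix 𝓜 corresponding to a positive eigenvalue μ, i.e., 𝓜v = μv with ‖v‖₂ = 1 and μ > 0. Let S = { i : v_i ≥ 0 }. If μ > [((vol S)² + (vol S̄)²)/vol V] · max_{i∈V} (v_i²/d_i), then Q(S) > 0. -/

import Mathlib

open Matrix Finset

/-!
With `u = D^{-1/2} v`, the Rayleigh quotient gives `μ = uᵀ A u - (δᵀ v)² / vol V ≤ uᵀ A u`.
Edges between `S` and `S̄` contribute nonpositively to `uᵀ A u`, since `u` has opposite
signs there, and every edge inside `S` or inside `S̄` contributes at most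
`max u_i² = max v_i² / d_i`. Hence `μ ≤ max (v_i² / d_i) · (e_in S + e_in S̄)`, and the
hypothesis on `μ` becomes `Q(S) + Q(S̄) > 0`. Finally `Q(S) = Q(S̄)`, as both equal
`vol S · vol S̄ / vol V - e(S, S̄)`.
-/

theorem Finset.sum_sum_eq_blocks {ι M : Type*} [Fintype ι] [DecidableEq ι] [AddCommMonoid M]
    (S : Finset ι) (f : ι → ι → M) :
    ∑ i, ∑ j, f i j = ∑ i ∈ S, ∑ j ∈ S, f i j + ∑ i ∈ S, ∑ j ∈ Sᶜ, f i j
      + (∑ i ∈ Sᶜ, ∑ j ∈ S, f i j + ∑ i ∈ Sᶜ, ∑ j ∈ Sᶜ, f i j) := by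
  simp only [← sum_add_distrib, sum_add_sum_compl]

section QuadraticForm
variable {ι R : Type*} [Fintype ι] [DecidableEq ι] [CommRing R]

theorem dotProduct_mulVec_diagonal_mul_mul_diagonal (s v : ι → R) (A : Matrix ι ι R) :
    v ⬝ᵥ (diagonal s * A * diagonal s) *ᵥ v = (s * v) ⬝ᵥ A *ᵥ (s * v) := by
  have h : ∀ w, diagonal s *ᵥ w = s * w := fun w => funext (mulVec_diagonal s w)
  rw [← mulVec_mulVec, ← mulVec_mulVec, h, h, dotProduct_comm, dotProduct_comm (s * v)]
  simp only [dotProduct, Pi.mul_apply]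
  exact sum_congr rfl fun i _ => by ring

theorem dotProduct_mulVec_diagonal_mul_mul_diagonal_sub_smul_vecMulVec
    (s w v : ι → R) (A : Matrix ι ι R) (c : R) :
    v ⬝ᵥ (diagonal s * A * diagonal s - c • vecMulVec w w) *ᵥ v
      = (s * v) ⬝ᵥ A *ᵥ (s * v) - c * (w ⬝ᵥ v) ^ 2 := by
  rw [sub_mulVec, dotProduct_sub, dotProduct_mulVec_diagonal_mul_mul_diagonal, smul_mulVec,
    vecMulVec_mulVec, op_smul_eq_smul, smul_smul, dotProduct_smul, smul_eq_mul,
    dotProduct_comm v w, sq, mul_assoc]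
end QuadraticForm

section Modularity
variable {ι : Type*} [Fintype ι] [DecidableEq ι]

theorem dotProduct_mulVec_le_of_sign {A : Matrix ι ι ℝ} (hA_nonneg : ∀ i j, 0 ≤ A i j)
    {u : ι → ℝ} {S : Finset ι} (hS : ∀ i ∈ S, 0 ≤ u i) (hSc : ∀ i ∈ Sᶜ, u i ≤ 0)
    {m : ℝ} (hm : ∀ i, u i ^ 2 ≤ m) :
    u ⬝ᵥ A *ᵥ u ≤ m * (∑ i ∈ S, ∑ j ∈ S, A i j + ∑ i ∈ Sᶜ, ∑ j ∈ Sᶜ, A i j) := by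
  have hform : u ⬝ᵥ A *ᵥ u = ∑ i, ∑ j, A i j * (u i * u j) := by
    simp only [dotProduct, mulVec, mul_sum]
    exact sum_congr rfl fun i _ => sum_congr rfl fun j _ => by ring
  have hsame : ∀ T : Finset ι,
      ∑ i ∈ T, ∑ j ∈ T, A i j * (u i * u j) ≤ m * ∑ i ∈ T, ∑ j ∈ T, A i j := by
    intro T
    simp only [mul_sum]
    refine sum_le_sum fun i _ => sum_le_sum fun j _ => ?_
    have huu : u i * u j ≤ m := by nlinarith [hm i, hm j, sq_nonneg (u i - u j)]
    rw [mul_comm m]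
    exact mul_le_mul_of_nonneg_left huu (hA_nonneg i j)
  have hcross : ∀ T T' : Finset ι, (∀ i ∈ T, ∀ j ∈ T', u i * u j ≤ 0) →
      ∑ i ∈ T, ∑ j ∈ T', A i j * (u i * u j) ≤ 0 := fun T T' h =>
    sum_nonpos fun i hi => sum_nonpos fun j hj =>
      mul_nonpos_of_nonneg_of_nonpos (hA_nonneg i j) (h i hi j hj)
  have hS_Sc := hcross S Sᶜ fun i hi j hj => mul_nonpos_of_nonneg_of_nonpos (hS i hi) (hSc j hj)
  have hSc_S := hcross Sᶜ S fun i hi j hj => mul_nonpos_of_nonpos_of_nonneg (hSc i hi) (hS j hj)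
  rw [hform, sum_sum_eq_blocks S]
  linarith [hsame S, hsame Sᶜ]

noncomputable def modularity (A : Matrix ι ι ℝ) (S : Finset ι) : ℝ :=
  ∑ i ∈ S, ∑ j ∈ S, A i j - (∑ i ∈ S, ∑ j, A i j) ^ 2 / ∑ i, ∑ j, A i j

theorem modularity_compl {A : Matrix ι ι ℝ} (hA_symm : A.IsSymm) (hA_nonneg : ∀ i j, 0 ≤ A i j)
    (S : Finset ι) : modularity A Sᶜ = modularity A S := by
  have hrow : ∀ i, ∑ j, A i j = ∑ j ∈ S, A i j + ∑ j ∈ Sᶜ, A i j :=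
    fun i => (sum_add_sum_compl S _).symm
  have hcut : ∑ i ∈ Sᶜ, ∑ j ∈ S, A i j = ∑ i ∈ S, ∑ j ∈ Sᶜ, A i j :=
    sum_comm.trans (sum_congr rfl fun i _ => sum_congr rfl fun j _ => hA_symm.apply i j)
  have hp : ∑ i ∈ S, ∑ j, A i j
      = ∑ i ∈ S, ∑ j ∈ S, A i j + ∑ i ∈ S, ∑ j ∈ Sᶜ, A i j := by
    simp only [hrow, sum_add_distrib]
  have hq : ∑ i ∈ Sᶜ, ∑ j, A i j
      = ∑ i ∈ Sᶜ, ∑ j ∈ Sᶜ, A i j + ∑ i ∈ S, ∑ j ∈ Sᶜ, A i j := by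
    simp only [hrow, sum_add_distrib, hcut, add_comm]
  have hvol : ∑ i, ∑ j, A i j = ∑ i ∈ S, ∑ j, A i j + ∑ i ∈ Sᶜ, ∑ j, A i j :=
    (sum_add_sum_compl S _).symm
  unfold modularity
  rw [hvol]
  set p := ∑ i ∈ S, ∑ j, A i j
  set q := ∑ i ∈ Sᶜ, ∑ j, A i j
  have key : (q ^ 2 - p ^ 2) / (p + q) = q - p := by
    rcases eq_or_ne (p + q) 0 with hpq | hpq
    · have : 0 ≤ p := sum_nonneg fun i _ => sum_nonneg fun j _ => hA_nonneg i j
      have : 0 ≤ q := sum_nonneg fun i _ => sum_nonneg fun j _ => hA_nonneg i j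
      rw [hpq, div_zero]
      linarith
    · rw [sq_sub_sq, add_comm q, mul_div_cancel_left₀ _ hpq]
  rw [sub_div] at key
  linarith
end Modularity

theorem nodal_domain_positive_modularity_of_large_eigenvalue_general
    {n : ℕ} (G : SimpleGraph (Fin n)) [DecidableRel G.Adj]
    (A : Matrix (Fin n) (Fin n) ℝ) (hA : A = G.adjMatrix ℝ)
    (d : Fin n → ℝ) (hd : d = fun i => ∑ j, A i j)
    (vol : ℝ) (hvol : vol = ∑ i, d i)
    (δ : Fin n → ℝ)
    (NM : Matrix (Fin n) (Fin n) ℝ)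
    (hNM : NM = diagonal (fun i => (Real.sqrt (d i))⁻¹) * A *
                diagonal (fun i => (Real.sqrt (d i))⁻¹) - (1 / vol) • vecMulVec δ δ)
    (μ : ℝ)
    (v : Fin n → ℝ) (hvnorm : ∑ i, v i ^ 2 = 1) (hvev : NM.mulVec v = μ • v)
    (S : Finset (Fin n)) (hS : S = univ.filter (fun i => 0 ≤ v i))
    (mx : ℝ) (hmx : IsGreatest {t : ℝ | ∃ i : Fin n, t = v i ^ 2 / d i} mx)
    (Q : Finset (Fin n) → ℝ)
    (hQ : ∀ T, Q T = (∑ i ∈ T, ∑ j ∈ T, A i j) - (∑ i ∈ T, d i) ^ 2 / vol)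
    (hμ : ((∑ i ∈ S, d i) ^ 2 + (∑ i ∈ Sᶜ, d i) ^ 2) / vol * mx < μ) :
    0 < Q S := by
  have hA_nonneg : ∀ i j, 0 ≤ A i j := fun i j => by
    rw [hA, SimpleGraph.adjMatrix_apply]; split_ifs <;> norm_num
  have hd0 : ∀ i, 0 ≤ d i := fun i => hd ▸ sum_nonneg fun j _ => hA_nonneg i j
  set u : Fin n → ℝ := fun i => v i / Real.sqrt (d i)
  have hμ_le : μ ≤ u ⬝ᵥ A *ᵥ u := by
    have hRayleigh : v ⬝ᵥ NM *ᵥ v = μ := by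
      rw [hvev, dotProduct_smul, smul_eq_mul]
      simp only [dotProduct, ← sq, hvnorm, mul_one]
    have hu : (fun i => (Real.sqrt (d i))⁻¹) * v = u := funext fun i => inv_mul_eq_div _ _
    rw [← hRayleigh, hNM, dotProduct_mulVec_diagonal_mul_mul_diagonal_sub_smul_vecMulVec, hu,
      one_div_mul_eq_div]
    exact sub_le_self _ (div_nonneg (sq_nonneg _) (hvol ▸ sum_nonneg fun i _ => hd0 i))
  have hmem : ∀ i, i ∈ S ↔ 0 ≤ v i := fun i => by rw [hS, mem_filter]; simp
  have hmem_compl : ∀ i, i ∈ Sᶜ ↔ v i < 0 := fun i => by rw [mem_compl, hmem, not_le]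
  have hbound := dotProduct_mulVec_le_of_sign hA_nonneg (u := u) (S := S)
    (fun i hi => div_nonneg ((hmem i).1 hi) (Real.sqrt_nonneg _))
    (fun i hi => div_nonpos_of_nonpos_of_nonneg ((hmem_compl i).1 hi).le (Real.sqrt_nonneg _))
    (fun i => by rw [div_pow, Real.sq_sqrt (hd0 i)]; exact hmx.2 ⟨i, rfl⟩)
  have hmx0 : 0 ≤ mx := by
    obtain ⟨i, rfl⟩ := hmx.1
    exact div_nonneg (sq_nonneg _) (hd0 i)
  have hQ_pair : 0 < Q S + Q Sᶜ := by
    refine pos_of_mul_pos_right ?_ hmx0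
    rw [hQ, hQ]
    linear_combination hμ + hμ_le + hbound
  have hQA : ∀ T, Q T = modularity A T := fun T => by rw [hQ, hvol, hd]; rfl
  rw [hQA Sᶜ, modularity_compl (hA ▸ G.isSymm_adjMatrix) hA_nonneg, ← hQA] at hQ_pair
  linarith

/-- Let `v` be a normalized eigenvector (`‖v‖₂ = 1`) of the normalized
modularity matrix `𝓜` for a positive eigenvalue `μ`, and `S = {i : v_i ≥ 0}`. If
`μ > [((vol S)² + (vol S̄)²)/vol V] · max_{i} (v_i²/d_i)`, then `Q(S) > 0`. -/
theorem nodal_domain_positive_modularity_of_large_eigenvalue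
    {n : ℕ} (hn : 0 < n) (G : SimpleGraph (Fin n)) [DecidableRel G.Adj]
    (hconn : G.Connected)
    (A : Matrix (Fin n) (Fin n) ℝ) (hA : A = G.adjMatrix ℝ)
    (d : Fin n → ℝ) (hd : d = fun i => ∑ j, A i j)
    (vol : ℝ) (hvol : vol = ∑ i, d i)
    (δ : Fin n → ℝ) (hδ : δ = fun i => Real.sqrt (d i))
    (NM : Matrix (Fin n) (Fin n) ℝ)
    (hNM : NM = diagonal (fun i => (Real.sqrt (d i))⁻¹) * A *
                diagonal (fun i => (Real.sqrt (d i))⁻¹) - (1 / vol) • vecMulVec δ δ)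
    (μ : ℝ) (hμpos : 0 < μ)
    (v : Fin n → ℝ) (hvnorm : ∑ i, v i ^ 2 = 1) (hvev : NM.mulVec v = μ • v)
    (S : Finset (Fin n)) (hS : S = univ.filter (fun i => 0 ≤ v i))
    (mx : ℝ) (hmx : IsGreatest {t : ℝ | ∃ i : Fin n, t = v i ^ 2 / d i} mx)
    (Q : Finset (Fin n) → ℝ)
    (hQ : ∀ T, Q T = (∑ i ∈ T, ∑ j ∈ T, A i j) - (∑ i ∈ T, d i) ^ 2 / vol)
    (hμ : ((∑ i ∈ S, d i) ^ 2 + (∑ i ∈ Sᶜ, d i) ^ 2) / vol * mx < μ) :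
    0 < Q S :=
  nodal_domain_positive_modularity_of_large_eigenvalue_general G A hA d hd vol hvol δ NM hNM μ v
    hvnorm hvev S hS mx hmx Q hQ hμ
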